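/- arXiv:2412.05441 — 3 statements merged into one kernel-verified Lean document; each statement's English description precedes it below -/
import Mathlib

section
/- Let R > 0, let ψ̄ : ℝ² × ℝ → ℝ be twice continuously differentiable in the spatial variables, let ξ̄, ν : ℝ² × ℝ → ℝ be continuously differentiable with ∂_t ξ̄ + [ψ̄, ξ̄] = R⁻²[ψ̄, ν] and ∂_t ν + [ψ̄, ν] = 0 everywhere, and let F, G : ℝ → ℝ be continuously differentiable with G′ = F. Then the density ξ̄·F(ν) satisfies the local conservation law ∂_t(ξ̄ F(ν)) + div((ξ̄ F(ν) − R⁻² G(ν)) ∇⊥ψ̄) = 0 at every point. -/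
noncomputable section

/-- Partial derivative in the first spatial coordinate. -/
def pdx (f : ℝ × ℝ → ℝ) (p : ℝ × ℝ) : ℝ := fderiv ℝ f p ((1 : ℝ), (0 : ℝ))

/-- Partial derivative in the second spatial coordinate. -/
def pdy (f : ℝ × ℝ → ℝ) (p : ℝ × ℝ) : ℝ := fderiv ℝ f p ((0 : ℝ), (1 : ℝ))

/-- The Jacobian (canonical Poisson) bracket `[a,b] = a_x b_y - a_y b_x`. -/
def jb (a b : ℝ × ℝ → ℝ) (p : ℝ × ℝ) : ℝ := pdx a p * pdy b p - pdy a p * pdx b p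

/-- Perpendicular gradient `∇⊥ψ = (-ψ_y, ψ_x)`. -/
def pgrad (ψ : ℝ × ℝ → ℝ) (p : ℝ × ℝ) : ℝ × ℝ := (-(pdy ψ p), pdx ψ p)

/-- Gradient `∇ψ = (ψ_x, ψ_y)`. -/
def grad2 (ψ : ℝ × ℝ → ℝ) (p : ℝ × ℝ) : ℝ × ℝ := (pdx ψ p, pdy ψ p)

/-- Divergence of a planar vector field. -/
def div2 (v : ℝ × ℝ → ℝ × ℝ) (p : ℝ × ℝ) : ℝ :=
  pdx (fun q => (v q).1) p + pdy (fun q => (v q).2) p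

/-- Laplacian of a scalar field. -/
def lap2 (ψ : ℝ × ℝ → ℝ) (p : ℝ × ℝ) : ℝ := pdx (pdx ψ) p + pdy (pdy ψ) p

/-- Time derivative of a time-dependent field on ℝ² × ℝ. -/
def pdt (f : (ℝ × ℝ) × ℝ → ℝ) (z : (ℝ × ℝ) × ℝ) : ℝ :=
  fderiv ℝ f z ((0 : ℝ × ℝ), (1 : ℝ))

/-- Jacobian bracket of time-dependent fields, acting in the spatial variables at fixed time. -/
def jbt (a b : (ℝ × ℝ) × ℝ → ℝ) (z : (ℝ × ℝ) × ℝ) : ℝ :=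
  jb (fun q => a (q, z.2)) (fun q => b (q, z.2)) z.1

/-!
With `S = ξ̄ F(ν) - R⁻² G(ν)`, the flux `S ∇⊥ψ̄` has divergence `∇S · ∇⊥ψ̄ = [ψ̄, S]`, since
`∇⊥ψ̄` is divergence-free by the symmetry of second derivatives. The bracket `[ψ̄, ·]` is the
derivative along `∇⊥ψ̄`, so `∂_t + [ψ̄, ·]` is the space-time derivative along `(∇⊥ψ̄, 1)` and
obeys the Leibniz and chain rules: applied to `ξ̄ F(ν)` it gives
`F(ν) (∂_t ξ̄ + [ψ̄, ξ̄]) + ξ̄ F'(ν) (∂_t ν + [ψ̄, ν]) = R⁻² F(ν) [ψ̄, ν] = R⁻² [ψ̄, G(ν)]`,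
which cancels the `-R⁻² G(ν)` part of the flux.
-/

lemma ContinuousLinearMap.apply_eq_fst_mul_add_snd_mul (L : ℝ × ℝ →L[ℝ] ℝ) (v : ℝ × ℝ) :
    L v = v.1 * L (1, 0) + v.2 * L (0, 1) := by
  conv_lhs => rw [show v = v.1 • ((1 : ℝ), (0 : ℝ)) + v.2 • ((0 : ℝ), (1 : ℝ)) by simp]
  rw [map_add, map_smul, map_smul, smul_eq_mul, smul_eq_mul]

lemma ContDiffAt.differentiableAt_fderiv {𝕜 E F : Type*} [NontriviallyNormedField 𝕜]
    [NormedAddCommGroup E] [NormedSpace 𝕜 E] [NormedAddCommGroup F] [NormedSpace 𝕜 F]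
    {f : E → F} {x : E} (hf : ContDiffAt 𝕜 2 f x) : DifferentiableAt 𝕜 (fderiv 𝕜 f) x :=
  (hf.fderiv_right (m := 1) (by norm_num)).differentiableAt one_ne_zero

section Plane

variable {ψ S : ℝ × ℝ → ℝ} {w : ℝ × ℝ → ℝ × ℝ} {p : ℝ × ℝ}

lemma jb_eq_fderiv_pgrad : jb ψ S p = fderiv ℝ S p (pgrad ψ p) := by
  rw [ContinuousLinearMap.apply_eq_fst_mul_add_snd_mul]
  simp only [jb, pgrad, pdx, pdy]
  ring

lemma pdx_pdy_comm (hψ : ContDiffAt ℝ 2 ψ p) : pdx (pdy ψ) p = pdy (pdx ψ) p := by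
  have hD := hψ.differentiableAt_fderiv.hasFDerivAt
  have happly (v : ℝ × ℝ) : HasFDerivAt (fun q => fderiv ℝ ψ q v)
      ((ContinuousLinearMap.apply ℝ ℝ v).comp (fderiv ℝ (fderiv ℝ ψ) p)) p :=
    (ContinuousLinearMap.apply ℝ ℝ v).hasFDerivAt.comp p hD
  rw [pdx, pdy, show pdy ψ = fun q => fderiv ℝ ψ q (0, 1) from rfl,
    show pdx ψ = fun q => fderiv ℝ ψ q (1, 0) from rfl, (happly _).fderiv, (happly _).fderiv]
  exact hψ.isSymmSndFDerivAt (by simp) _ _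

lemma div2_pgrad (hψ : ContDiffAt ℝ 2 ψ p) : div2 (pgrad ψ) p = 0 := by
  have hneg : pdx (fun q => -pdy ψ q) p = -pdx (pdy ψ) p := by
    rw [pdx, pdx, fderiv_fun_neg, neg_apply]
  rw [div2, show (fun q => (pgrad ψ q).1) = fun q => -pdy ψ q from rfl, hneg,
    pdx_pdy_comm hψ]
  exact neg_add_cancel _

lemma div2_smul (hS : DifferentiableAt ℝ S p) (hw : DifferentiableAt ℝ w p) :
    div2 (fun q => S q • w q) p = fderiv ℝ S p (w p) + S p * div2 w p := by
  rw [ContinuousLinearMap.apply_eq_fst_mul_add_snd_mul]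
  simp only [div2, pdx, pdy, Prod.smul_fst, Prod.smul_snd, smul_eq_mul,
    fderiv_fun_mul hS hw.fst, fderiv_fun_mul hS hw.snd, add_apply, smul_apply]
  ring

lemma div2_smul_pgrad (hS : DifferentiableAt ℝ S p) (hψ : ContDiffAt ℝ 2 ψ p) :
    div2 (fun q => S q • pgrad ψ q) p = jb ψ S p := by
  have hD := hψ.differentiableAt_fderiv
  have hgrad : DifferentiableAt ℝ (pgrad ψ) p :=
    (hD.clm_apply (differentiableAt_const _)).neg.prodMk
      (hD.clm_apply (differentiableAt_const _))
  rw [div2_smul hS hgrad, div2_pgrad hψ, jb_eq_fderiv_pgrad, mul_zero, add_zero]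

end Plane

section SpaceTime

variable {f : (ℝ × ℝ) × ℝ → ℝ} {f' : (ℝ × ℝ) × ℝ →L[ℝ] ℝ} {z : (ℝ × ℝ) × ℝ}

lemma HasFDerivAt.pdt_eq (hf : HasFDerivAt f f' z) : pdt f z = f' (0, 1) := by
  rw [pdt, hf.fderiv]

lemma HasFDerivAt.hasFDerivAt_slice (hf : HasFDerivAt f f' z) :
    HasFDerivAt (fun q => f (q, z.2)) (f'.comp (.inl ℝ (ℝ × ℝ) ℝ)) z.1 :=
  hf.comp z.1 (hasFDerivAt_prodMk_left z.1 z.2)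

lemma HasFDerivAt.jbt_eq (ψ : (ℝ × ℝ) × ℝ → ℝ) (hf : HasFDerivAt f f' z) :
    jbt ψ f z = f' (pgrad (fun q => ψ (q, z.2)) z.1, 0) := by
  rw [jbt, jb_eq_fderiv_pgrad, hf.hasFDerivAt_slice.fderiv]
  rfl

end SpaceTime

theorem weak_casimir_local_conservation_law_general (R : ℝ)
    (ψbar ξbar ν : (ℝ × ℝ) × ℝ → ℝ)
    (hψbar : ∀ t : ℝ, ContDiff ℝ 2 (fun q : ℝ × ℝ => ψbar (q, t)))
    (hξbar : ContDiff ℝ 1 ξbar) (hν : ContDiff ℝ 1 ν)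
    (heq1 : ∀ z : (ℝ × ℝ) × ℝ, pdt ξbar z + jbt ψbar ξbar z = (R ^ 2)⁻¹ * jbt ψbar ν z)
    (heq2 : ∀ z : (ℝ × ℝ) × ℝ, pdt ν z + jbt ψbar ν z = 0)
    (F G : ℝ → ℝ) (hF : ContDiff ℝ 1 F)
    (hG' : ∀ s : ℝ, HasDerivAt G (F s) s)
    (z : (ℝ × ℝ) × ℝ) :
    pdt (fun w => ξbar w * F (ν w)) z
      + div2 (fun q => (ξbar (q, z.2) * F (ν (q, z.2)) - (R ^ 2)⁻¹ * G (ν (q, z.2))) •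
          pgrad (fun q' => ψbar (q', z.2)) q) z.1 = 0 := by
  have hξ := (hξbar.differentiable one_ne_zero z).hasFDerivAt
  have hν' := (hν.differentiable one_ne_zero z).hasFDerivAt
  have hF' := (hF.differentiable one_ne_zero (ν z)).hasDerivAt
  have hdensity : HasFDerivAt (fun w => ξbar w * F (ν w)) _ z :=
    hξ.mul (hF'.comp_hasFDerivAt z hν')
  have hflux : HasFDerivAt
      (fun w => ξbar w * F (ν w) - (R ^ 2)⁻¹ * G (ν w)) _ z :=
    hdensity.sub (((hG' (ν z)).comp_hasFDerivAt z hν').const_mul _)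
  have h1 := heq1 z
  have h2 := heq2 z
  rw [hξ.pdt_eq, hξ.jbt_eq, hν'.jbt_eq] at h1
  rw [hν'.pdt_eq, hν'.jbt_eq] at h2
  rw [div2_smul_pgrad hflux.hasFDerivAt_slice.differentiableAt (hψbar z.2).contDiffAt]
  change pdt _ z + jbt ψbar (fun w => ξbar w * F (ν w) - (R ^ 2)⁻¹ * G (ν w)) z = 0
  rw [hdensity.pdt_eq, hflux.jbt_eq]
  simp only [sub_apply, add_apply, smul_apply, smul_eq_mul]
  linear_combination F (ν z) * h1 + ξbar z * deriv F (ν z) * h2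

/-- local conservation law for the weak Casimir density `ξ̄ F(ν)`. -/
theorem weak_casimir_local_conservation_law (R : ℝ) (hR : 0 < R)
    (ψbar ξbar ν : (ℝ × ℝ) × ℝ → ℝ)
    (hψbar : ∀ t : ℝ, ContDiff ℝ 2 (fun q : ℝ × ℝ => ψbar (q, t)))
    (hξbar : ContDiff ℝ 1 ξbar) (hν : ContDiff ℝ 1 ν)
    (heq1 : ∀ z : (ℝ × ℝ) × ℝ, pdt ξbar z + jbt ψbar ξbar z = (R ^ 2)⁻¹ * jbt ψbar ν z)
    (heq2 : ∀ z : (ℝ × ℝ) × ℝ, pdt ν z + jbt ψbar ν z = 0)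
    (F G : ℝ → ℝ) (hF : ContDiff ℝ 1 F) (hG : ContDiff ℝ 1 G)
    (hG' : ∀ s : ℝ, HasDerivAt G (F s) s)
    (z : (ℝ × ℝ) × ℝ) :
    pdt (fun w => ξbar w * F (ν w)) z
      + div2 (fun q => (ξbar (q, z.2) * F (ν (q, z.2)) - (R ^ 2)⁻¹ * G (ν (q, z.2))) •
          pgrad (fun q' => ψbar (q', z.2)) q) z.1 = 0 :=
  weak_casimir_local_conservation_law_general R ψbar ξbar ν hψbar hξbar hν heq1 heq2 F G hF hG' z
end
end

section
/- Let R > 0, let ψ̄, ξ̄, ν : ℝ² × ℝ → ℝ be smooth, with ψ̄(·,t), ξ̄(·,t) and ν(·,t) all supported in a single fixed compact set K ⊂ ℝ² for every t, and suppose ∂_t ξ̄ + [ψ̄, ξ̄] = R⁻²[ψ̄, ν] and ∂_t ν + [ψ̄, ν] = 0 hold everywhere. Then for every continuously differentiable F : ℝ → ℝ, the function t ↦ ∫_{ℝ²} ξ̄(x,t) F(ν(x,t)) dx is constant. -/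
noncomputable section

open MeasureTheory

/-! ### Auxiliary lemmas -/

/-- 1D: integral of derivative of compactly supported C¹ function is zero. -/
lemma aux_integral_deriv_zero {f : ℝ → ℝ} (hf : ContDiff ℝ 1 f) (h2f : HasCompactSupport f) :
    ∫ x : ℝ, deriv f x = 0 := by
  have hc : Continuous (deriv f) := (contDiff_one_iff_deriv.1 hf).2
  have hint : Integrable (deriv f) := hc.integrable_of_hasCompactSupport h2f.deriv
  rw [← intervalIntegral.integral_Iic_add_Ioi hint.integrableOn hint.integrableOn,
    h2f.integral_Iic_deriv_eq hf 0, h2f.integral_Ioi_deriv_eq hf 0]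
  ring

lemma aux_hasDerivAt_slice_x {c : ℝ × ℝ → ℝ} (hc : Differentiable ℝ c) (x y : ℝ) :
    HasDerivAt (fun s => c (s, y)) (pdx c (x, y)) x := by
  have h1 : HasDerivAt (fun s : ℝ => (s, y)) (((1 : ℝ), (0 : ℝ))) x :=
    HasDerivAt.prodMk (hasDerivAt_id x) (hasDerivAt_const x y)
  exact (hc (x, y)).hasFDerivAt.comp_hasDerivAt x h1

lemma aux_hasDerivAt_slice_y {c : ℝ × ℝ → ℝ} (hc : Differentiable ℝ c) (x y : ℝ) :
    HasDerivAt (fun s => c (x, s)) (pdy c (x, y)) y := by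
  have h1 : HasDerivAt (fun s : ℝ => (x, s)) (((0 : ℝ), (1 : ℝ))) y :=
    HasDerivAt.prodMk (hasDerivAt_const y x) (hasDerivAt_id y)
  exact (hc (x, y)).hasFDerivAt.comp_hasDerivAt y h1

lemma aux_hasDerivAt_slice_t {g : (ℝ × ℝ) × ℝ → ℝ} (hg : Differentiable ℝ g) (x : ℝ × ℝ)
    (t : ℝ) : HasDerivAt (fun s => g (x, s)) (pdt g (x, t)) t := by
  have h1 : HasDerivAt (fun s : ℝ => ((x : ℝ × ℝ), s)) (((0 : ℝ × ℝ), (1 : ℝ))) t :=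
    HasDerivAt.prodMk (hasDerivAt_const t x) (hasDerivAt_id t)
  exact (hg (x, t)).hasFDerivAt.comp_hasDerivAt t h1

lemma aux_hcs_pd {c : ℝ × ℝ → ℝ} (h2c : HasCompactSupport c) (v : ℝ × ℝ) :
    HasCompactSupport (fun p => fderiv ℝ c p v) := by
  have := h2c.fderiv (𝕜 := ℝ)
  exact this.comp_left (g := fun L : (ℝ × ℝ) →L[ℝ] ℝ => L v) (by simp)

lemma aux_cont_pd {c : ℝ × ℝ → ℝ} (hc : ContDiff ℝ 1 c) (v : ℝ × ℝ) :
    Continuous (fun p => fderiv ℝ c p v) :=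
  (hc.continuous_fderiv one_ne_zero).clm_apply continuous_const

/-- 2D: integral of x-partial of compactly supported C¹ function is zero. -/
lemma aux_integral_pdx_zero {c : ℝ × ℝ → ℝ} (hc : ContDiff ℝ 1 c)
    (h2c : HasCompactSupport c) : ∫ p : ℝ × ℝ, pdx c p = 0 := by
  have hint : Integrable (pdx c) :=
    (aux_cont_pd hc _).integrable_of_hasCompactSupport (aux_hcs_pd h2c _)
  rw [show (volume : Measure (ℝ × ℝ)) = (volume : Measure ℝ).prod volume from
    Measure.volume_eq_prod ℝ ℝ] at hint ⊢
  rw [MeasureTheory.integral_prod_symm _ hint]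
  have : ∀ y : ℝ, ∫ x : ℝ, pdx c (x, y) = 0 := by
    intro y
    have hslice : ContDiff ℝ 1 (fun s : ℝ => c (s, y)) :=
      hc.comp (contDiff_id.prodMk contDiff_const)
    have hcs : HasCompactSupport (fun s : ℝ => c (s, y)) := by
      apply HasCompactSupport.intro (h2c.isCompact.image continuous_fst)
      intro s hs
      by_contra h
      exact hs ⟨(s, y), subset_tsupport _ h, rfl⟩
    have : ∀ x : ℝ, pdx c (x, y) = deriv (fun s : ℝ => c (s, y)) x := fun x =>
      (aux_hasDerivAt_slice_x (hc.differentiable one_ne_zero) x y).deriv.symm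
    simp_rw [this]
    exact aux_integral_deriv_zero hslice hcs
  simp_rw [this, integral_zero]

/-- 2D: integral of y-partial of compactly supported C¹ function is zero. -/
lemma aux_integral_pdy_zero {c : ℝ × ℝ → ℝ} (hc : ContDiff ℝ 1 c)
    (h2c : HasCompactSupport c) : ∫ p : ℝ × ℝ, pdy c p = 0 := by
  have hint : Integrable (pdy c) :=
    (aux_cont_pd hc _).integrable_of_hasCompactSupport (aux_hcs_pd h2c _)
  rw [show (volume : Measure (ℝ × ℝ)) = (volume : Measure ℝ).prod volume from
    Measure.volume_eq_prod ℝ ℝ] at hint ⊢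
  rw [MeasureTheory.integral_prod _ hint]
  have : ∀ x : ℝ, ∫ y : ℝ, pdy c (x, y) = 0 := by
    intro x
    have hslice : ContDiff ℝ 1 (fun s : ℝ => c (x, s)) :=
      hc.comp (contDiff_const.prodMk contDiff_id)
    have hcs : HasCompactSupport (fun s : ℝ => c (x, s)) := by
      apply HasCompactSupport.intro (h2c.isCompact.image continuous_snd)
      intro s hs
      by_contra h
      exact hs ⟨(x, s), subset_tsupport _ h, rfl⟩
    have : ∀ y : ℝ, pdy c (x, y) = deriv (fun s : ℝ => c (x, s)) y := fun y =>
      (aux_hasDerivAt_slice_y (hc.differentiable one_ne_zero) x y).deriv.symm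
    simp_rw [this]
    exact aux_integral_deriv_zero hslice hcs
  simp_rw [this, integral_zero]

lemma aux_hasFDerivAt_pd {ψ : ℝ × ℝ → ℝ} (hψ : ContDiff ℝ (⊤ : ℕ∞) ψ) (v : ℝ × ℝ) (p : ℝ × ℝ) :
    HasFDerivAt (fun q => fderiv ℝ ψ q v)
      ((ContinuousLinearMap.apply ℝ ℝ v).comp (fderiv ℝ (fderiv ℝ ψ) p)) p := by
  have h1 : HasFDerivAt (fderiv ℝ ψ) (fderiv ℝ (fderiv ℝ ψ) p) p :=
    (((hψ.fderiv_right (m := (⊤ : ℕ∞)) (by simp)).differentiable (by simp)) p).hasFDerivAt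
  exact ((ContinuousLinearMap.apply ℝ ℝ v).hasFDerivAt).comp p h1

/-- Clairaut for smooth ψ. -/
lemma aux_symm_snd {ψ : ℝ × ℝ → ℝ} (hψ : ContDiff ℝ (⊤ : ℕ∞) ψ) (p : ℝ × ℝ) (v w : ℝ × ℝ) :
    fderiv ℝ (fderiv ℝ ψ) p v w = fderiv ℝ (fderiv ℝ ψ) p w v :=
  second_derivative_symmetric (fun y => ((hψ.differentiable (by simp)) y).hasFDerivAt)
    ((((hψ.fderiv_right (m := (⊤ : ℕ∞)) (by simp)).differentiable (by simp)) p).hasFDerivAt) v w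

/-- Divergence form of the bracket: `jb ψ h = ∂_y(ψ_x h) − ∂_x(ψ_y h)`. -/
lemma aux_jb_eq_div {ψ h : ℝ × ℝ → ℝ} (hψ : ContDiff ℝ (⊤ : ℕ∞) ψ) (hh : ContDiff ℝ 1 h)
    (p : ℝ × ℝ) :
    jb ψ h p = pdy (fun q => pdx ψ q * h q) p - pdx (fun q => pdy ψ q * h q) p := by
  have hhd : HasFDerivAt h (fderiv ℝ h p) p := ((hh.differentiable one_ne_zero) p).hasFDerivAt
  have h1 : HasFDerivAt (fun q => pdx ψ q * h q)
      (pdx ψ p • fderiv ℝ h p + h p • ((ContinuousLinearMap.apply ℝ ℝ ((1:ℝ),(0:ℝ))).comp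
        (fderiv ℝ (fderiv ℝ ψ) p))) p :=
    (aux_hasFDerivAt_pd hψ ((1:ℝ),(0:ℝ)) p).mul hhd
  have h2 : HasFDerivAt (fun q => pdy ψ q * h q)
      (pdy ψ p • fderiv ℝ h p + h p • ((ContinuousLinearMap.apply ℝ ℝ ((0:ℝ),(1:ℝ))).comp
        (fderiv ℝ (fderiv ℝ ψ) p))) p :=
    (aux_hasFDerivAt_pd hψ ((0:ℝ),(1:ℝ)) p).mul hhd
  have e1 : pdy (fun q => pdx ψ q * h q) p
      = pdx ψ p * pdy h p + h p * fderiv ℝ (fderiv ℝ ψ) p ((0:ℝ),(1:ℝ)) ((1:ℝ),(0:ℝ)) := by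
    rw [pdy, h1.fderiv]; simp [pdx, pdy]
  have e2 : pdx (fun q => pdy ψ q * h q) p
      = pdy ψ p * pdx h p + h p * fderiv ℝ (fderiv ℝ ψ) p ((1:ℝ),(0:ℝ)) ((0:ℝ),(1:ℝ)) := by
    rw [pdx, h2.fderiv]; simp [pdx, pdy]
  rw [e1, e2, aux_symm_snd hψ p ((0:ℝ),(1:ℝ)) ((1:ℝ),(0:ℝ))]
  simp [jb]

lemma aux_contDiff_pd {ψ : ℝ × ℝ → ℝ} (hψ : ContDiff ℝ (⊤ : ℕ∞) ψ) (v : ℝ × ℝ) :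
    ContDiff ℝ 1 (fun q => fderiv ℝ ψ q v) :=
  (hψ.fderiv_right (m := 1) (WithTop.coe_le_coe.2 le_top)).clm_apply contDiff_const

/-- Key lemma: the bracket of a smooth field with a compactly supported C¹ field
integrates to zero. -/
lemma aux_integral_jb_zero {ψ h : ℝ × ℝ → ℝ} (hψ : ContDiff ℝ (⊤ : ℕ∞) ψ) (hh : ContDiff ℝ 1 h)
    (h2h : HasCompactSupport h) : ∫ p : ℝ × ℝ, jb ψ h p = 0 := by
  set c₁ : ℝ × ℝ → ℝ := fun q => pdx ψ q * h q with hc₁def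
  set c₂ : ℝ × ℝ → ℝ := fun q => pdy ψ q * h q with hc₂def
  have hc₁ : ContDiff ℝ 1 c₁ := (aux_contDiff_pd hψ _).mul hh
  have hc₂ : ContDiff ℝ 1 c₂ := (aux_contDiff_pd hψ _).mul hh
  have hs₁ : HasCompactSupport c₁ := by
    apply HasCompactSupport.intro h2h.isCompact
    intro q hq
    simp [hc₁def, image_eq_zero_of_notMem_tsupport hq]
  have hs₂ : HasCompactSupport c₂ := by
    apply HasCompactSupport.intro h2h.isCompact
    intro q hq
    simp [hc₂def, image_eq_zero_of_notMem_tsupport hq]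
  have heq : (fun p => jb ψ h p) = fun p => pdy c₁ p - pdx c₂ p :=
    funext fun p => aux_jb_eq_div hψ hh p
  have h1 : Integrable (fun p => pdy c₁ p) :=
    (aux_cont_pd hc₁ _).integrable_of_hasCompactSupport (aux_hcs_pd hs₁ _)
  have h2 : Integrable (fun p => pdx c₂ p) :=
    (aux_cont_pd hc₂ _).integrable_of_hasCompactSupport (aux_hcs_pd hs₂ _)
  rw [heq, MeasureTheory.integral_sub h1 h2,
    aux_integral_pdy_zero hc₁ hs₁, aux_integral_pdx_zero hc₂ hs₂, sub_zero]

/-- Integrability of the bracket. -/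
lemma aux_jb_integrable {ψ h : ℝ × ℝ → ℝ} (hψ : ContDiff ℝ (⊤ : ℕ∞) ψ) (hh : ContDiff ℝ 1 h)
    (h2h : HasCompactSupport h) : Integrable (jb ψ h) := by
  have hcont : Continuous (jb ψ h) := by
    apply Continuous.sub
    · exact (aux_cont_pd (hψ.of_le (by simp)) _).mul (aux_cont_pd hh _)
    · exact (aux_cont_pd (hψ.of_le (by simp)) _).mul (aux_cont_pd hh _)
  have hcs : HasCompactSupport (jb ψ h) := by
    apply HasCompactSupport.intro h2h.isCompact
    intro q hq
    have : fderiv ℝ h q = 0 := by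
      by_contra hne
      exact hq (support_fderiv_subset ℝ (Function.mem_support.2 hne))
    simp [jb, pdx, pdy, this]
  exact hcont.integrable_of_hasCompactSupport hcs

open Metric in
/-- conservation of the weak Casimirs `∫ ξ̄ F(ν) d²x` for smooth,
compactly supported fields. -/
theorem weak_casimir_integral_conserved (R : ℝ) (hR : 0 < R)
    (ψbar ξbar ν : (ℝ × ℝ) × ℝ → ℝ)
    (hψbar : ContDiff ℝ (⊤ : ℕ∞) ψbar) (hξbar : ContDiff ℝ (⊤ : ℕ∞) ξbar) (hν : ContDiff ℝ (⊤ : ℕ∞) ν)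
    (K : Set (ℝ × ℝ)) (hK : IsCompact K)
    (hsψ : ∀ t : ℝ, Function.support (fun x : ℝ × ℝ => ψbar (x, t)) ⊆ K)
    (hsξ : ∀ t : ℝ, Function.support (fun x : ℝ × ℝ => ξbar (x, t)) ⊆ K)
    (hsν : ∀ t : ℝ, Function.support (fun x : ℝ × ℝ => ν (x, t)) ⊆ K)
    (heq1 : ∀ z : (ℝ × ℝ) × ℝ, pdt ξbar z + jbt ψbar ξbar z = (R ^ 2)⁻¹ * jbt ψbar ν z)
    (heq2 : ∀ z : (ℝ × ℝ) × ℝ, pdt ν z + jbt ψbar ν z = 0)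
    (F : ℝ → ℝ) (hF : ContDiff ℝ 1 F) (s t : ℝ) :
    ∫ x : ℝ × ℝ, ξbar (x, t) * F (ν (x, t)) = ∫ x : ℝ × ℝ, ξbar (x, s) * F (ν (x, s)) := by
  classical
  set g : (ℝ × ℝ) × ℝ → ℝ := fun z => ξbar z * F (ν z) with hgdef
  have hg : ContDiff ℝ 1 g := (hξbar.of_le (by simp)).mul (hF.comp (hν.of_le (by simp)))
  set W : (ℝ × ℝ) × ℝ → ℝ := fun z => pdt g z with hWdef
  have hWcont : Continuous W := (hg.continuous_fderiv one_ne_zero).clm_apply continuous_const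
  -- pointwise formula for W
  have hWpt : ∀ z : (ℝ × ℝ) × ℝ,
      W z = F (ν z) * pdt ξbar z + ξbar z * (deriv F (ν z) * pdt ν z) := by
    intro z
    have hξd : HasFDerivAt ξbar (fderiv ℝ ξbar z) z :=
      ((hξbar.differentiable (by simp)) z).hasFDerivAt
    have hνd : HasFDerivAt ν (fderiv ℝ ν z) z := ((hν.differentiable (by simp)) z).hasFDerivAt
    have hFd : HasDerivAt F (deriv F (ν z)) (ν z) :=
      ((hF.differentiable one_ne_zero) (ν z)).hasDerivAt
    have hcomp : HasFDerivAt (fun w => F (ν w)) (deriv F (ν z) • fderiv ℝ ν z) z :=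
      hFd.comp_hasFDerivAt z hνd
    have hmul : HasFDerivAt g
        (ξbar z • (deriv F (ν z) • fderiv ℝ ν z) + F (ν z) • fderiv ℝ ξbar z) z :=
      hξd.mul hcomp
    show pdt g z = _
    rw [pdt, hmul.fderiv]
    simp [pdt]
    ring
  -- the integral of W over a time slice vanishes
  have hzero : ∀ τ : ℝ, ∫ x : ℝ × ℝ, W (x, τ) = 0 := by
    intro τ
    set ψt : ℝ × ℝ → ℝ := fun q => ψbar (q, τ) with hψtdef
    set ξt : ℝ × ℝ → ℝ := fun q => ξbar (q, τ) with hξtdef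
    set νt : ℝ × ℝ → ℝ := fun q => ν (q, τ) with hνtdef
    have hψt : ContDiff ℝ (⊤ : ℕ∞) ψt := hψbar.comp (contDiff_id.prodMk contDiff_const)
    have hξt : ContDiff ℝ (⊤ : ℕ∞) ξt := hξbar.comp (contDiff_id.prodMk contDiff_const)
    have hνt : ContDiff ℝ (⊤ : ℕ∞) νt := hν.comp (contDiff_id.prodMk contDiff_const)
    -- antiderivative of F
    set G : ℝ → ℝ := fun y => ∫ u in (0:ℝ)..y, F u with hGdef
    have hGderiv : ∀ y : ℝ, HasDerivAt G (F y) y := fun y =>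
      (hF.continuous.integral_hasStrictDerivAt 0 y).hasDerivAt
    have hGC1 : ContDiff ℝ 1 G := by
      refine contDiff_one_iff_deriv.2 ⟨fun y => (hGderiv y).differentiableAt, ?_⟩
      have : deriv G = F := funext fun y => (hGderiv y).deriv
      rw [this]; exact hF.continuous
    have hG0 : G 0 = 0 := by simp [hGdef]
    set Gt : ℝ × ℝ → ℝ := fun q => G (νt q) with hGtdef
    set ht : ℝ × ℝ → ℝ := fun q => ξt q * F (νt q) with hhtdef
    have hGt : ContDiff ℝ 1 Gt := hGC1.comp (hνt.of_le (by simp))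
    have hht : ContDiff ℝ 1 ht := (hξt.of_le (by simp)).mul (hF.comp (hνt.of_le (by simp)))
    have hνt0 : ∀ x : ℝ × ℝ, x ∉ K → νt x = 0 := by
      intro x hx; by_contra h; exact hx (hsν τ h)
    have hξt0 : ∀ x : ℝ × ℝ, x ∉ K → ξt x = 0 := by
      intro x hx; by_contra h; exact hx (hsξ τ h)
    have hcsGt : HasCompactSupport Gt := by
      apply HasCompactSupport.intro hK
      intro x hx
      simp [hGtdef, hνt0 x hx, hG0]
    have hcsht : HasCompactSupport ht := by
      apply HasCompactSupport.intro hK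
      intro x hx
      simp [hhtdef, hξt0 x hx]
    -- pointwise identities
    have eG : ∀ x : ℝ × ℝ, jb ψt Gt x = F (νt x) * jb ψt νt x := by
      intro x
      have hνtd : HasFDerivAt νt (fderiv ℝ νt x) x :=
        ((hνt.differentiable (by simp)) x).hasFDerivAt
      have hc : HasFDerivAt Gt (F (νt x) • fderiv ℝ νt x) x :=
        (hGderiv (νt x)).comp_hasFDerivAt x hνtd
      simp only [jb, pdx, pdy, hc.fderiv]
      simp
      ring
    have eh : ∀ x : ℝ × ℝ, jb ψt ht x
        = F (νt x) * jb ψt ξt x + ξt x * (deriv F (νt x) * jb ψt νt x) := by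
      intro x
      have hνtd : HasFDerivAt νt (fderiv ℝ νt x) x :=
        ((hνt.differentiable (by simp)) x).hasFDerivAt
      have hξtd : HasFDerivAt ξt (fderiv ℝ ξt x) x :=
        ((hξt.differentiable (by simp)) x).hasFDerivAt
      have hFd : HasDerivAt F (deriv F (νt x)) (νt x) :=
        ((hF.differentiable one_ne_zero) (νt x)).hasDerivAt
      have hcomp : HasFDerivAt (fun q => F (νt q)) (deriv F (νt x) • fderiv ℝ νt x) x :=
        hFd.comp_hasFDerivAt x hνtd
      have hmul : HasFDerivAt ht
          (ξt x • (deriv F (νt x) • fderiv ℝ νt x) + F (νt x) • fderiv ℝ ξt x) x :=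
        hξtd.mul hcomp
      simp only [jb, pdx, pdy, hmul.fderiv]
      simp
      ring
    -- main pointwise identity for W on the slice
    have hWt : ∀ x : ℝ × ℝ, W (x, τ) = (R ^ 2)⁻¹ * jb ψt Gt x - jb ψt ht x := by
      intro x
      have h1 := heq1 (x, τ)
      have h2 := heq2 (x, τ)
      have j1 : jbt ψbar ν (x, τ) = jb ψt νt x := rfl
      have j2 : jbt ψbar ξbar (x, τ) = jb ψt ξt x := rfl
      rw [j1, j2] at h1
      rw [j1] at h2
      have e1 : pdt ξbar (x, τ) = (R ^ 2)⁻¹ * jb ψt νt x - jb ψt ξt x := by linarith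
      have e2 : pdt ν (x, τ) = - jb ψt νt x := by linarith
      rw [hWpt (x, τ), e1, e2, eG x, eh x]
      show F (νt x) * _ + ξt x * (deriv F (νt x) * _) = _
      ring
    -- integrate
    have hintG : Integrable (jb ψt Gt) := aux_jb_integrable hψt hGt hcsGt
    have hinth : Integrable (jb ψt ht) := aux_jb_integrable hψt hht hcsht
    rw [show (fun x : ℝ × ℝ => W (x, τ))
        = fun x => (R ^ 2)⁻¹ * jb ψt Gt x - jb ψt ht x from funext hWt]
    rw [MeasureTheory.integral_sub (hintG.const_mul _) hinth,
      MeasureTheory.integral_const_mul, aux_integral_jb_zero hψt hGt hcsGt,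
      aux_integral_jb_zero hψt hht hcsht]
    ring
  -- differentiate under the integral sign
  have hI : ∀ t₀ : ℝ, HasDerivAt (fun τ => ∫ x : ℝ × ℝ, g (x, τ)) 0 t₀ := by
    intro t₀
    obtain ⟨C, hC⟩ := (hK.prod (isCompact_Icc (a := t₀ - 1) (b := t₀ + 1))).exists_bound_of_continuousOn
      hWcont.continuousOn
    have hg0 : ∀ x : ℝ × ℝ, x ∉ K → ∀ τ : ℝ, g (x, τ) = 0 := by
      intro x hx τ
      have : ξbar (x, τ) = 0 := by
        by_contra h; exact hx (hsξ τ h)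
      simp [hgdef, this]
    have hW0 : ∀ x : ℝ × ℝ, x ∉ K → ∀ τ : ℝ, W (x, τ) = 0 := by
      intro x hx τ
      have hslice : HasDerivAt (fun u => g (x, u)) (W (x, τ)) τ :=
        aux_hasDerivAt_slice_t (hg.differentiable one_ne_zero) x τ
      have hfun : (fun u => g (x, u)) = fun _ => (0 : ℝ) := funext fun u => hg0 x hx u
      rw [hfun] at hslice
      exact hslice.unique (hasDerivAt_const τ 0)
    have key := hasDerivAt_integral_of_dominated_loc_of_deriv_le (μ := volume)
      (F := fun τ (x : ℝ × ℝ) => g (x, τ)) (F' := fun τ (x : ℝ × ℝ) => W (x, τ))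
      (x₀ := t₀) (bound := K.indicator fun _ => C) (s := ball t₀ 1) (ball_mem_nhds t₀ one_pos)
      (Filter.Eventually.of_forall fun τ =>
        (hg.continuous.comp (Continuous.prodMk_left τ)).aestronglyMeasurable)
      ((hg.continuous.comp (Continuous.prodMk_left t₀)).integrable_of_hasCompactSupport
        (HasCompactSupport.intro hK fun x hx => hg0 x hx t₀))
      ((hWcont.comp (Continuous.prodMk_left t₀)).aestronglyMeasurable)
      (Filter.Eventually.of_forall ?_) ?_ (Filter.Eventually.of_forall ?_)
    · have : (∫ x : ℝ × ℝ, W (x, t₀)) = 0 := hzero t₀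
      rw [this] at key
      exact key.2
    · -- bound
      intro x τ hτ
      by_cases hx : x ∈ K
      · have hτ' : τ ∈ Set.Icc (t₀ - 1) (t₀ + 1) := by
          rw [mem_ball, Real.dist_eq] at hτ
          have h := abs_lt.1 hτ
          exact ⟨by linarith [h.1], by linarith [h.2]⟩
        have hmem : (x, τ) ∈ K ×ˢ Set.Icc (t₀ - 1) (t₀ + 1) := ⟨hx, hτ'⟩
        calc ‖W (x, τ)‖ ≤ C := hC _ hmem
          _ = K.indicator (fun _ => C) x := by simp [Set.indicator_of_mem hx]
      · simp only [Set.indicator_of_notMem hx, hW0 x hx τ, norm_zero, le_refl]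
    · -- bound integrable
      rw [integrable_indicator_iff hK.measurableSet]
      exact integrableOn_const hK.measure_lt_top.ne
    · -- differentiability
      intro x τ hτ
      exact aux_hasDerivAt_slice_t (hg.differentiable one_ne_zero) x τ
  -- conclude
  have hdiff : Differentiable ℝ (fun τ => ∫ x : ℝ × ℝ, g (x, τ)) :=
    fun τ => (hI τ).differentiableAt
  have hconst := is_const_of_deriv_eq_zero hdiff (fun τ => (hI τ).deriv) t s
  exact hconst
end
end

section
/- Let R > 0, β ∈ ℝ, let ψ̄, ν : ℝ² × ℝ → ℝ be smooth, define the potential vorticity by the invertibility relation ξ̄ := Δψ̄ − R⁻²ψ̄ + R⁻²ν + β x₂ (Laplacian in the spatial variables, x₂ the second spatial coordinate), and suppose ∂_t ξ̄ + [ψ̄, ξ̄] = R⁻²[ψ̄, ν] and ∂_t ν + [ψ̄, ν] = 0 hold everywhere. Then the energy density e := ½|∇ψ̄|² + ½R⁻²ψ̄² satisfies the local conservation law ∂_t e = div( ψ̄ ∇(∂_t ψ̄) + (ξ̄ − 2R⁻²ν) ψ̄ ∇⊥ψ̄ ) at every point, all spatial operators taken at fixed time. -/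
noncomputable section

/-! ### Auxiliary machinery -/

/-- Directional derivative of a scalar field on `(ℝ × ℝ) × ℝ`. -/
def Dv (v : (ℝ × ℝ) × ℝ) (f : (ℝ × ℝ) × ℝ → ℝ) : (ℝ × ℝ) × ℝ → ℝ :=
  fun z => fderiv ℝ f z v

def u1 : (ℝ × ℝ) × ℝ := (((1:ℝ), (0:ℝ)), (0:ℝ))
def u2 : (ℝ × ℝ) × ℝ := (((0:ℝ), (1:ℝ)), (0:ℝ))
def u3 : (ℝ × ℝ) × ℝ := ((0 : ℝ × ℝ), (1:ℝ))

lemma smooth_Dv {f : (ℝ × ℝ) × ℝ → ℝ} (hf : ContDiff ℝ (⊤ : ℕ∞) f) (v : (ℝ × ℝ) × ℝ) :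
    ContDiff ℝ (⊤ : ℕ∞) (Dv v f) :=
  (hf.fderiv_right (by simp)).clm_apply contDiff_const

lemma diffAt {f : (ℝ × ℝ) × ℝ → ℝ} (hf : ContDiff ℝ (⊤ : ℕ∞) f) (z : (ℝ × ℝ) × ℝ) :
    DifferentiableAt ℝ f z :=
  (hf.differentiable (by simp)) z

lemma Dv_comm {f : (ℝ × ℝ) × ℝ → ℝ} (hf : ContDiff ℝ (⊤ : ℕ∞) f) (a b z : (ℝ × ℝ) × ℝ) :
    Dv a (Dv b f) z = Dv b (Dv a f) z := by
  have hd : DifferentiableAt ℝ (fderiv ℝ f) z :=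
    ((hf.fderiv_right (m := 1) (WithTop.coe_le_coe.mpr le_top)).differentiable one_ne_zero) z
  have key : ∀ v w : (ℝ × ℝ) × ℝ, Dv v (Dv w f) z = fderiv ℝ (fderiv ℝ f) z v w := by
    intro v w
    show fderiv ℝ (fun y => (fderiv ℝ f y) w) z v = _
    rw [fderiv_clm_apply hd (differentiableAt_const w)]
    simp
  rw [key, key]
  exact (hf.contDiffAt.isSymmSndFDerivAt (by rw [minSmoothness_of_isRCLikeNormedField]; exact WithTop.coe_le_coe.mpr le_top)) a b

lemma slice_hasFDerivAt {f : (ℝ × ℝ) × ℝ → ℝ} (hf : ContDiff ℝ (⊤ : ℕ∞) f) (p : ℝ × ℝ) (t : ℝ) :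
    HasFDerivAt (fun q : ℝ × ℝ => f (q, t))
      ((fderiv ℝ f (p, t)).comp ((ContinuousLinearMap.id ℝ (ℝ × ℝ)).prod 0)) p :=
  (diffAt hf (p, t)).hasFDerivAt.comp p (HasFDerivAt.prodMk (hasFDerivAt_id p) (hasFDerivAt_const t p))

lemma pdx_slice {f : (ℝ × ℝ) × ℝ → ℝ} (hf : ContDiff ℝ (⊤ : ℕ∞) f) (p : ℝ × ℝ) (t : ℝ) :
    pdx (fun q => f (q, t)) p = Dv u1 f (p, t) := by
  rw [pdx, (slice_hasFDerivAt hf p t).fderiv]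
  simp [Dv, u1]

lemma pdy_slice {f : (ℝ × ℝ) × ℝ → ℝ} (hf : ContDiff ℝ (⊤ : ℕ∞) f) (p : ℝ × ℝ) (t : ℝ) :
    pdy (fun q => f (q, t)) p = Dv u2 f (p, t) := by
  rw [pdy, (slice_hasFDerivAt hf p t).fderiv]
  simp [Dv, u2]

lemma Dv_add {f g : (ℝ × ℝ) × ℝ → ℝ} (hf : ContDiff ℝ (⊤ : ℕ∞) f) (hg : ContDiff ℝ (⊤ : ℕ∞) g)
    (v z : (ℝ × ℝ) × ℝ) :
    Dv v (fun w => f w + g w) z = Dv v f z + Dv v g z := by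
  show fderiv ℝ _ z v = _
  rw [fderiv_fun_add (diffAt hf z) (diffAt hg z)]; rfl

lemma Dv_sub {f g : (ℝ × ℝ) × ℝ → ℝ} (hf : ContDiff ℝ (⊤ : ℕ∞) f) (hg : ContDiff ℝ (⊤ : ℕ∞) g)
    (v z : (ℝ × ℝ) × ℝ) :
    Dv v (fun w => f w - g w) z = Dv v f z - Dv v g z := by
  show fderiv ℝ _ z v = _
  rw [fderiv_fun_sub (diffAt hf z) (diffAt hg z)]; rfl

lemma Dv_mul {f g : (ℝ × ℝ) × ℝ → ℝ} (hf : ContDiff ℝ (⊤ : ℕ∞) f) (hg : ContDiff ℝ (⊤ : ℕ∞) g)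
    (v z : (ℝ × ℝ) × ℝ) :
    Dv v (fun w => f w * g w) z = f z * Dv v g z + g z * Dv v f z := by
  show fderiv ℝ _ z v = _
  rw [fderiv_fun_mul (diffAt hf z) (diffAt hg z)]
  simp [Dv, smul_eq_mul]

lemma Dv_const_mul {f : (ℝ × ℝ) × ℝ → ℝ} (hf : ContDiff ℝ (⊤ : ℕ∞) f) (c : ℝ) (v z : (ℝ × ℝ) × ℝ) :
    Dv v (fun w => c * f w) z = c * Dv v f z := by
  show fderiv ℝ _ z v = _
  rw [fderiv_const_mul (diffAt hf z)]
  simp [Dv, smul_eq_mul]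

lemma Dv_neg {f : (ℝ × ℝ) × ℝ → ℝ} (v z : (ℝ × ℝ) × ℝ) :
    Dv v (fun w => -(f w)) z = -(Dv v f z) := by
  show fderiv ℝ _ z v = _
  rw [fderiv_fun_neg]; simp [Dv]

lemma Dv_sq {f : (ℝ × ℝ) × ℝ → ℝ} (hf : ContDiff ℝ (⊤ : ℕ∞) f) (v z : (ℝ × ℝ) × ℝ) :
    Dv v (fun w => f w ^ 2) z = 2 * f z * Dv v f z := by
  have h2 : (fun w => f w ^ 2) = fun w => f w * f w := by funext w; ring
  rw [h2, Dv_mul hf hf]; ring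

lemma Dv_coord (v z : (ℝ × ℝ) × ℝ) : Dv v (fun w : (ℝ × ℝ) × ℝ => w.1.2) z = v.1.2 := by
  have h : (fun w : (ℝ × ℝ) × ℝ => w.1.2) =
      ⇑((ContinuousLinearMap.snd ℝ ℝ ℝ).comp (ContinuousLinearMap.fst ℝ (ℝ × ℝ) ℝ)) := rfl
  show fderiv ℝ _ z v = _
  rw [h, ContinuousLinearMap.fderiv]
  rfl

/-- local form of energy conservation for the IL^(0,α)QG. -/
theorem energy_local_conservation_law (R : ℝ) (hR : 0 < R) (β : ℝ)
    (ψbar ν : (ℝ × ℝ) × ℝ → ℝ)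
    (hψbar : ContDiff ℝ (⊤ : ℕ∞) ψbar) (hν : ContDiff ℝ (⊤ : ℕ∞) ν)
    (ξbar : (ℝ × ℝ) × ℝ → ℝ)
    (hξbar : ξbar = fun z => lap2 (fun q => ψbar (q, z.2)) z.1
      - (R ^ 2)⁻¹ * ψbar z + (R ^ 2)⁻¹ * ν z + β * z.1.2)
    (heq1 : ∀ z : (ℝ × ℝ) × ℝ, pdt ξbar z + jbt ψbar ξbar z = (R ^ 2)⁻¹ * jbt ψbar ν z)
    (heq2 : ∀ z : (ℝ × ℝ) × ℝ, pdt ν z + jbt ψbar ν z = 0)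
    (e : (ℝ × ℝ) × ℝ → ℝ)
    (he : e = fun z => (1 / 2) * ((pdx (fun q => ψbar (q, z.2)) z.1) ^ 2
        + (pdy (fun q => ψbar (q, z.2)) z.1) ^ 2)
      + (1 / 2) * (R ^ 2)⁻¹ * (ψbar z) ^ 2)
    (z : (ℝ × ℝ) × ℝ) :
    pdt e z = div2 (fun q =>
        ψbar (q, z.2) • grad2 (fun q' => pdt ψbar (q', z.2)) q
      + ((ξbar (q, z.2) - 2 * (R ^ 2)⁻¹ * ν (q, z.2)) * ψbar (q, z.2)) •
          pgrad (fun q' => ψbar (q', z.2)) q) z.1 := by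
  -- smoothness of basic derived fields
  have sP1 := smooth_Dv hψbar u1
  have sP2 := smooth_Dv hψbar u2
  have sP3 := smooth_Dv hψbar u3
  have sP13 := smooth_Dv sP3 u1
  have sP23 := smooth_Dv sP3 u2
  have sP11 := smooth_Dv sP1 u1
  have sP22 := smooth_Dv sP2 u2
  -- commutation of derivatives
  have c13 : Dv u3 (Dv u1 ψbar) = Dv u1 (Dv u3 ψbar) := funext fun w => Dv_comm hψbar u3 u1 w
  have c23 : Dv u3 (Dv u2 ψbar) = Dv u2 (Dv u3 ψbar) := funext fun w => Dv_comm hψbar u3 u2 w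
  -- ξ in directional-derivative form
  have hξ2 : ξbar = fun w => Dv u1 (Dv u1 ψbar) w + Dv u2 (Dv u2 ψbar) w
      - (R ^ 2)⁻¹ * ψbar w + (R ^ 2)⁻¹ * ν w + β * w.1.2 := by
    rw [hξbar]; funext w
    have e1 : pdx (fun q => ψbar (q, w.2)) = fun q => Dv u1 ψbar (q, w.2) :=
      funext fun q => pdx_slice hψbar q w.2
    have e2 : pdy (fun q => ψbar (q, w.2)) = fun q => Dv u2 ψbar (q, w.2) :=
      funext fun q => pdy_slice hψbar q w.2
    simp only [lap2]
    rw [e1, e2, pdx_slice sP1 w.1 w.2, pdy_slice sP2 w.1 w.2, Prod.mk.eta]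
  have scoord : ContDiff ℝ (⊤ : ℕ∞) (fun w : (ℝ × ℝ) × ℝ => w.1.2) := contDiff_snd.comp contDiff_fst
  have sCP : ContDiff ℝ (⊤ : ℕ∞) (fun w => (R ^ 2)⁻¹ * ψbar w) := contDiff_const.mul hψbar
  have sCN : ContDiff ℝ (⊤ : ℕ∞) (fun w => (R ^ 2)⁻¹ * ν w) := contDiff_const.mul hν
  have s1 : ContDiff ℝ (⊤ : ℕ∞) (fun w => Dv u1 (Dv u1 ψbar) w + Dv u2 (Dv u2 ψbar) w) :=
    sP11.add sP22
  have s2 : ContDiff ℝ (⊤ : ℕ∞) (fun w => Dv u1 (Dv u1 ψbar) w + Dv u2 (Dv u2 ψbar) w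
      - (R ^ 2)⁻¹ * ψbar w) := s1.sub sCP
  have s3 : ContDiff ℝ (⊤ : ℕ∞) (fun w => Dv u1 (Dv u1 ψbar) w + Dv u2 (Dv u2 ψbar) w
      - (R ^ 2)⁻¹ * ψbar w + (R ^ 2)⁻¹ * ν w) := s2.add sCN
  have sξ : ContDiff ℝ (⊤ : ℕ∞) ξbar := by
    rw [hξ2]; exact s3.add (contDiff_const.mul scoord)
  -- expansion of the bracket
  have hjbt : ∀ (a b : (ℝ × ℝ) × ℝ → ℝ), ContDiff ℝ (⊤ : ℕ∞) a → ContDiff ℝ (⊤ : ℕ∞) b →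
      ∀ w : (ℝ × ℝ) × ℝ,
      jbt a b w = Dv u1 a w * Dv u2 b w - Dv u2 a w * Dv u1 b w := by
    intro a b ha hb w
    simp only [jbt, jb]
    rw [pdx_slice ha w.1 w.2, pdy_slice hb w.1 w.2, pdy_slice ha w.1 w.2,
      pdx_slice hb w.1 w.2, Prod.mk.eta]
  -- the evolution equations in directional-derivative form
  have hN3 : ∀ w : (ℝ × ℝ) × ℝ, Dv u3 ν w
      = -(Dv u1 ψbar w * Dv u2 ν w - Dv u2 ψbar w * Dv u1 ν w) := by
    intro w
    have h := heq2 w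
    rw [hjbt ψbar ν hψbar hν w, show pdt ν w = Dv u3 ν w from rfl] at h
    linarith
  have hX3' : ∀ w : (ℝ × ℝ) × ℝ, Dv u3 ξbar w
      = (R ^ 2)⁻¹ * (Dv u1 ψbar w * Dv u2 ν w - Dv u2 ψbar w * Dv u1 ν w)
        - (Dv u1 ψbar w * Dv u2 ξbar w - Dv u2 ψbar w * Dv u1 ξbar w) := by
    intro w
    have h := heq1 w
    rw [hjbt ψbar ξbar hψbar sξ w, hjbt ψbar ν hψbar hν w,
      show pdt ξbar w = Dv u3 ξbar w from rfl] at h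
    linarith
  have hX3 : ∀ w : (ℝ × ℝ) × ℝ, Dv u3 ξbar w
      = Dv u1 (Dv u1 (Dv u3 ψbar)) w + Dv u2 (Dv u2 (Dv u3 ψbar)) w
        - (R ^ 2)⁻¹ * Dv u3 ψbar w + (R ^ 2)⁻¹ * Dv u3 ν w := by
    intro w
    conv_lhs => rw [hξ2]
    rw [Dv_add s3 (contDiff_const.mul scoord) u3 w, Dv_add s2 sCN u3 w,
      Dv_sub s1 sCP u3 w, Dv_add sP11 sP22 u3 w,
      Dv_const_mul hψbar ((R ^ 2)⁻¹) u3 w, Dv_const_mul hν ((R ^ 2)⁻¹) u3 w,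
      Dv_const_mul scoord β u3 w, Dv_coord u3 w,
      Dv_comm sP1 u3 u1 w, Dv_comm sP2 u3 u2 w, c13, c23]
    simp [u3]
  -- the energy in directional-derivative form
  have he2 : e = fun w => (1 / 2) * (Dv u1 ψbar w ^ 2 + Dv u2 ψbar w ^ 2)
      + (1 / 2) * (R ^ 2)⁻¹ * ψbar w ^ 2 := by
    rw [he]; funext w
    rw [pdx_slice hψbar w.1 w.2, pdy_slice hψbar w.1 w.2, Prod.mk.eta]
  have sE1 : ContDiff ℝ (⊤ : ℕ∞) (fun w => Dv u1 ψbar w ^ 2 + Dv u2 ψbar w ^ 2) :=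
    (sP1.pow 2).add (sP2.pow 2)
  have sPsq : ContDiff ℝ (⊤ : ℕ∞) (fun w => ψbar w ^ 2) := hψbar.pow 2
  have hLHS : pdt e z = Dv u1 ψbar z * Dv u1 (Dv u3 ψbar) z
      + Dv u2 ψbar z * Dv u2 (Dv u3 ψbar) z + (R ^ 2)⁻¹ * (ψbar z * Dv u3 ψbar z) := by
    show Dv u3 e z = _
    rw [he2, Dv_add (contDiff_const.mul sE1) (contDiff_const.mul sPsq) u3 z,
      Dv_const_mul sE1 (1 / 2) u3 z, Dv_const_mul sPsq ((1 / 2) * (R ^ 2)⁻¹) u3 z,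
      Dv_add (sP1.pow 2) (sP2.pow 2) u3 z, Dv_sq sP1 u3 z, Dv_sq sP2 u3 z,
      Dv_sq hψbar u3 z, Dv_comm hψbar u3 u1 z, Dv_comm hψbar u3 u2 z]
    ring
  -- the flux components as slices of fields on (ℝ×ℝ)×ℝ
  have sg : ContDiff ℝ (⊤ : ℕ∞) (fun w => ξbar w - 2 * (R ^ 2)⁻¹ * ν w) :=
    sξ.sub (contDiff_const.mul hν)
  have sgp : ContDiff ℝ (⊤ : ℕ∞) (fun w => (ξbar w - 2 * (R ^ 2)⁻¹ * ν w) * ψbar w) := sg.mul hψbar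
  have sF1 : ContDiff ℝ (⊤ : ℕ∞) (fun w => ψbar w * Dv u1 (Dv u3 ψbar) w
      + (ξbar w - 2 * (R ^ 2)⁻¹ * ν w) * ψbar w * -Dv u2 ψbar w) :=
    (hψbar.mul sP13).add (sgp.mul sP2.neg)
  have sF2 : ContDiff ℝ (⊤ : ℕ∞) (fun w => ψbar w * Dv u2 (Dv u3 ψbar) w
      + (ξbar w - 2 * (R ^ 2)⁻¹ * ν w) * ψbar w * Dv u1 ψbar w) :=
    (hψbar.mul sP23).add (sgp.mul sP1)
  have hv1 : (fun q => ((ψbar (q, z.2) • grad2 (fun q' => pdt ψbar (q', z.2)) q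
        + ((ξbar (q, z.2) - 2 * (R ^ 2)⁻¹ * ν (q, z.2)) * ψbar (q, z.2)) •
          pgrad (fun q' => ψbar (q', z.2)) q).1))
      = fun q => ψbar (q, z.2) * Dv u1 (Dv u3 ψbar) (q, z.2)
        + (ξbar (q, z.2) - 2 * (R ^ 2)⁻¹ * ν (q, z.2)) * ψbar (q, z.2)
          * -Dv u2 ψbar (q, z.2) := by
    funext q
    simp only [grad2, pgrad, Prod.smul_mk, Prod.mk_add_mk, smul_eq_mul]
    rw [show (fun q' => pdt ψbar (q', z.2)) = (fun q' => Dv u3 ψbar (q', z.2)) from rfl,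
      pdx_slice sP3 q z.2, pdy_slice hψbar q z.2]
  have hv2 : (fun q => ((ψbar (q, z.2) • grad2 (fun q' => pdt ψbar (q', z.2)) q
        + ((ξbar (q, z.2) - 2 * (R ^ 2)⁻¹ * ν (q, z.2)) * ψbar (q, z.2)) •
          pgrad (fun q' => ψbar (q', z.2)) q).2))
      = fun q => ψbar (q, z.2) * Dv u2 (Dv u3 ψbar) (q, z.2)
        + (ξbar (q, z.2) - 2 * (R ^ 2)⁻¹ * ν (q, z.2)) * ψbar (q, z.2)
          * Dv u1 ψbar (q, z.2) := by
    funext q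
    simp only [grad2, pgrad, Prod.smul_mk, Prod.mk_add_mk, smul_eq_mul]
    rw [show (fun q' => pdt ψbar (q', z.2)) = (fun q' => Dv u3 ψbar (q', z.2)) from rfl,
      pdy_slice sP3 q z.2, pdx_slice hψbar q z.2]
  -- put everything together
  rw [hLHS]
  simp only [div2]
  rw [hv1, hv2, pdx_slice sF1 z.1 z.2, pdy_slice sF2 z.1 z.2, Prod.mk.eta,
    Dv_add (hψbar.mul sP13) (sgp.mul sP2.neg) u1 z,
    Dv_mul hψbar sP13 u1 z, Dv_mul sgp sP2.neg u1 z, Dv_mul sg hψbar u1 z,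
    Dv_neg u1 z, Dv_sub sξ (contDiff_const.mul hν) u1 z,
    Dv_const_mul hν (2 * (R ^ 2)⁻¹) u1 z,
    Dv_add (hψbar.mul sP23) (sgp.mul sP1) u2 z,
    Dv_mul hψbar sP23 u2 z, Dv_mul sgp sP1 u2 z, Dv_mul sg hψbar u2 z,
    Dv_sub sξ (contDiff_const.mul hν) u2 z,
    Dv_const_mul hν (2 * (R ^ 2)⁻¹) u2 z,
    Dv_comm hψbar u2 u1 z]
  linear_combination (ψbar z) * hX3 z - (ψbar z) * hX3' z
    + (R ^ 2)⁻¹ * (ψbar z) * hN3 z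
end
end
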